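/- arXiv:1612.07135 — 9 statements merged into one kernel-verified Lean document; each statement's English description precedes it below -/
import Mathlib

section
/- For all a > 0 with G(a) ≠ 0 and G(1/a) ≠ 0, H(1/a) = 1/H(a) provided H(a) ≠ 0, where H(a) = a²·F(a)/G(a), F(a) = S_n·a − C₂₁(a), G(a) = S_n − a³·C₁₂(a). -/
open Real Finset

/-!
The inversion `x ↦ 1/x` scales the kernel `1 + x² - 2x cos θ` by `1/x²`, hence its `3/2`-power by
`1/x³`. Termwise this exchanges the two sums: `C₁₂(1/a) = a² C₂₁(a)` and `C₂₁(1/a) = a² C₁₂(a)`.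
Consequently `F(1/a) = G(a)/a` and `G(1/a) = F(a)/a`, which gives `H(1/a) = G(a)/(a² F(a)) = 1/H(a)`.
-/

lemma one_add_sq_sub_two_mul_nonneg (a : ℝ) {c : ℝ} (hc : |c| ≤ 1) :
    0 ≤ 1 + a ^ 2 - 2 * a * c := by
  nlinarith [sq_nonneg (a - c), sq_abs c, abs_nonneg c]

lemma sq_rpow_three_halves {a : ℝ} (ha : 0 ≤ a) : (a ^ 2) ^ ((3 : ℝ) / 2) = a ^ 3 := by
  rw [← Real.rpow_natCast a 2, ← Real.rpow_mul ha]
  norm_num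

lemma one_add_inv_sq_sub_rpow {a : ℝ} (ha : 0 < a) {c : ℝ} (hc : |c| ≤ 1) :
    (1 + (1 / a) ^ 2 - 2 * (1 / a) * c) ^ ((3 : ℝ) / 2)
      = (1 + a ^ 2 - 2 * a * c) ^ ((3 : ℝ) / 2) / a ^ 3 := by
  have hscale : 1 + (1 / a) ^ 2 - 2 * (1 / a) * c = (1 + a ^ 2 - 2 * a * c) / a ^ 2 := by
    field_simp
    ring
  rw [hscale, Real.div_rpow (one_add_sq_sub_two_mul_nonneg a hc) (sq_nonneg a),
    sq_rpow_three_halves ha.le]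

lemma one_sub_inv_mul_div_rpow {a : ℝ} (ha : 0 < a) {c : ℝ} (hc : |c| ≤ 1) :
    (1 - (1 / a) * c) / (1 + (1 / a) ^ 2 - 2 * (1 / a) * c) ^ ((3 : ℝ) / 2)
      = a ^ 2 * ((a - c) / (1 + a ^ 2 - 2 * a * c) ^ ((3 : ℝ) / 2)) := by
  rw [one_add_inv_sq_sub_rpow ha hc, div_div_eq_mul_div]
  field_simp

lemma inv_sub_div_rpow {a : ℝ} (ha : 0 < a) {c : ℝ} (hc : |c| ≤ 1) :
    (1 / a - c) / (1 + (1 / a) ^ 2 - 2 * (1 / a) * c) ^ ((3 : ℝ) / 2)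
      = a ^ 2 * ((1 - a * c) / (1 + a ^ 2 - 2 * a * c) ^ ((3 : ℝ) / 2)) := by
  rw [one_add_inv_sq_sub_rpow ha hc, div_div_eq_mul_div]
  field_simp

theorem stmt_3_general (n : ℕ) (a : ℝ) (ha : 0 < a) :
    (let Sn : ℝ := 1/4 * ∑ k ∈ Finset.range (n-1), 1 / Real.sin ((k+1 : ℝ) * Real.pi / n)
     let C12 : ℝ → ℝ := fun x => ∑ k ∈ Finset.range n,
        (1 - x * Real.cos ((2*(k : ℝ)+1) * Real.pi / n)) /
          (1 + x^2 - 2*x*Real.cos ((2*(k : ℝ)+1) * Real.pi / n)) ^ ((3:ℝ)/2)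
     let C21 : ℝ → ℝ := fun x => ∑ k ∈ Finset.range n,
        (x - Real.cos ((2*(k : ℝ)+1) * Real.pi / n)) /
          (1 + x^2 - 2*x*Real.cos ((2*(k : ℝ)+1) * Real.pi / n)) ^ ((3:ℝ)/2)
     let F : ℝ → ℝ := fun x => Sn * x - C21 x
     let G : ℝ → ℝ := fun x => Sn - x^3 * C12 x
     let H : ℝ → ℝ := fun x => x^2 * F x / G x
     G a ≠ 0 → G (1/a) ≠ 0 → H a ≠ 0 → H (1/a) = 1 / H a) := by
  intro Sn C12 C21 F G H _ _ _
  have hC12 : C12 (1 / a) = a ^ 2 * C21 a := by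
    simp only [C12, C21, Finset.mul_sum]
    exact Finset.sum_congr rfl fun k _ => one_sub_inv_mul_div_rpow ha (abs_cos_le_one _)
  have hC21 : C21 (1 / a) = a ^ 2 * C12 a := by
    simp only [C12, C21, Finset.mul_sum]
    exact Finset.sum_congr rfl fun k _ => inv_sub_div_rpow ha (abs_cos_le_one _)
  have hF : F (1 / a) = G a / a := by
    simp only [F, G, hC21]
    field_simp
  have hG : G (1 / a) = F a / a := by
    simp only [F, G, hC12]
    field_simp
  simp only [H, hF, hG]
  field_simp

theorem stmt_3 (n : ℕ) (hn : 2 ≤ n) (a : ℝ) (ha : 0 < a) :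
    (let Sn : ℝ := 1/4 * ∑ k ∈ Finset.range (n-1), 1 / Real.sin ((k+1 : ℝ) * Real.pi / n)
     let C12 : ℝ → ℝ := fun x => ∑ k ∈ Finset.range n,
        (1 - x * Real.cos ((2*(k : ℝ)+1) * Real.pi / n)) /
          (1 + x^2 - 2*x*Real.cos ((2*(k : ℝ)+1) * Real.pi / n)) ^ ((3:ℝ)/2)
     let C21 : ℝ → ℝ := fun x => ∑ k ∈ Finset.range n,
        (x - Real.cos ((2*(k : ℝ)+1) * Real.pi / n)) /
          (1 + x^2 - 2*x*Real.cos ((2*(k : ℝ)+1) * Real.pi / n)) ^ ((3:ℝ)/2)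
     let F : ℝ → ℝ := fun x => Sn * x - C21 x
     let G : ℝ → ℝ := fun x => Sn - x^3 * C12 x
     let H : ℝ → ℝ := fun x => x^2 * F x / G x
     G a ≠ 0 → G (1/a) ≠ 0 → H a ≠ 0 → H (1/a) = 1 / H a) :=
  stmt_3_general n a ha
end

section
/- For n = 3, the equation F(a) = 0 has exactly two solutions z₁, z₂ in (0,∞), with 3/8 < z₁ < 7/16 and 25/16 < z₂ < 13/8; moreover F(a) < 0 for a ∈ (z₁, z₂) and F(a) > 0 for a ∈ (0, z₁) ∪ (z₂, ∞). -/
open Real Set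

/-!
Away from the windows `(3/8, 7/16)` and `(25/16, 13/8)` the sign of `F` is certified by
enclosures on a few subintervals `[l, u]`: each of `√3 a / 3`, `1 / (1 + a)²`, and the numerator
and denominator of `(2a - 1) / (q a √(q a))` is bounded by its value at an endpoint, with `√3` and
`√(q ·)` replaced by rational bounds. Near `0` this cannot work since `F 0 = 0`, and a direct
estimate takes over. On the first window `F' < 0`; on `[25/16, ∞)` we have `F' > 0` because there
`1 + 8a - 8a² < 0`. So `F` changes sign exactly once in each window.
-/

noncomputable def F (a : ℝ) : ℝ :=
  √3 / 3 * a - (2 * a - 1) / (1 + a ^ 2 - a) ^ ((3 : ℝ) / 2) - 1 / (1 + a) ^ 2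

def q (a : ℝ) : ℝ := 1 + a ^ 2 - a

lemma q_pos (a : ℝ) : 0 < q a := by
  unfold q; nlinarith [sq_nonneg (a - 1 / 2)]

lemma q_le_q_of_le_of_le_half {a b : ℝ} (hab : a ≤ b) (hb : b ≤ 1 / 2) : q b ≤ q a := by
  unfold q; nlinarith

lemma q_le_q_of_half_le_of_le {a b : ℝ} (ha : 1 / 2 ≤ a) (hab : a ≤ b) : q a ≤ q b := by
  unfold q; nlinarith

lemma F_eq (a : ℝ) : F a = √3 / 3 * a - (2 * a - 1) / (q a * √(q a)) - 1 / (1 + a) ^ 2 := by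
  rw [F, ← q, show (3 : ℝ) / 2 = 1 + 1 / 2 by norm_num, rpow_add (q_pos a), rpow_one,
    ← sqrt_eq_rpow]

lemma sqrt_three_bounds : 1.732 < √3 ∧ √3 < 1.7321 := by
  constructor
  · rw [lt_sqrt (by norm_num)]; norm_num
  · rw [sqrt_lt' (by norm_num)]; norm_num

lemma mul_le_mul_sqrt {s Q x : ℝ} (hs : 0 < s) (hsQ : s ^ 2 ≤ Q) (hQx : Q ≤ x) :
    Q * s ≤ x * √x :=
  mul_le_mul hQx ((le_sqrt hs.le (by nlinarith)).2 (hsQ.trans hQx)) hs.le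
    (by nlinarith)

lemma mul_sqrt_le_mul {s Q x : ℝ} (hs : 0 ≤ s) (hx : 0 ≤ x) (hxQ : x ≤ Q) (hQs : Q ≤ s ^ 2) :
    x * √x ≤ Q * s :=
  mul_le_mul hxQ ((sqrt_le_left hs).2 (hxQ.trans hQs)) (sqrt_nonneg x) (hx.trans hxQ)

section Enclosure

variable {l u s a : ℝ}

lemma div_lower_of_le_half (hla : l ≤ a) (hau : a ≤ u) (hu : u ≤ 1 / 2) (hs : 0 < s)
    (hsq : s ^ 2 ≤ q u) : (2 * l - 1) / (q u * s) ≤ (2 * a - 1) / (q a * √(q a)) := by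
  rw [← neg_le_neg_iff, ← neg_div, ← neg_div]
  exact div_le_div₀ (by linarith) (by linarith) (mul_pos (q_pos u) hs)
    (mul_le_mul_sqrt hs hsq (q_le_q_of_le_of_le_half hau hu))

lemma div_upper_of_le_half (hla : l ≤ a) (hau : a ≤ u) (hu : u ≤ 1 / 2) (hs : 0 ≤ s)
    (hsq : q l ≤ s ^ 2) : (2 * a - 1) / (q a * √(q a)) ≤ (2 * u - 1) / (q l * s) := by
  rw [← neg_le_neg_iff, ← neg_div, ← neg_div]
  exact div_le_div₀ (by linarith) (by linarith) (by have := q_pos a; positivity)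
    (mul_sqrt_le_mul hs (q_pos a).le (q_le_q_of_le_of_le_half hla (hau.trans hu)) hsq)

lemma div_lower_of_half_le (hl : 1 / 2 ≤ l) (hla : l ≤ a) (hau : a ≤ u) (hs : 0 ≤ s)
    (hsq : q u ≤ s ^ 2) : (2 * l - 1) / (q u * s) ≤ (2 * a - 1) / (q a * √(q a)) :=
  div_le_div₀ (by linarith) (by linarith) (by have := q_pos a; positivity)
    (mul_sqrt_le_mul hs (q_pos a).le (q_le_q_of_half_le_of_le (hl.trans hla) hau) hsq)

lemma div_upper_of_half_le (hl : 1 / 2 ≤ l) (hla : l ≤ a) (hau : a ≤ u) (hs : 0 < s)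
    (hsq : s ^ 2 ≤ q l) : (2 * a - 1) / (q a * √(q a)) ≤ (2 * u - 1) / (q l * s) :=
  div_le_div₀ (by linarith) (by linarith) (mul_pos (q_pos l) hs)
    (mul_le_mul_sqrt hs hsq (q_le_q_of_half_le_of_le hl hla))

lemma F_le_of_div_lower {M : ℝ} (ha : 0 ≤ a) (hau : a ≤ u)
    (hM : M ≤ (2 * a - 1) / (q a * √(q a))) : F a ≤ 1.7321 / 3 * u - M - 1 / (1 + u) ^ 2 := by
  have h3 : √3 / 3 * a ≤ 1.7321 / 3 * u := by nlinarith [sqrt_three_bounds, sqrt_nonneg 3]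
  have hsq : 1 / (1 + u) ^ 2 ≤ 1 / (1 + a) ^ 2 := one_div_le_one_div_of_le (by positivity)
    (pow_le_pow_left₀ (by linarith) (by linarith) 2)
  rw [F_eq]
  linarith

lemma le_F_of_div_upper {M : ℝ} (hl : 0 < l) (hla : l ≤ a)
    (hM : (2 * a - 1) / (q a * √(q a)) ≤ M) : 1.732 / 3 * l - M - 1 / (1 + l) ^ 2 ≤ F a := by
  have h3 : 1.732 / 3 * l ≤ √3 / 3 * a := by nlinarith [sqrt_three_bounds]
  have hsq : 1 / (1 + a) ^ 2 ≤ 1 / (1 + l) ^ 2 := one_div_le_one_div_of_le (by positivity)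
    (pow_le_pow_left₀ (by linarith) (by linarith) 2)
  rw [F_eq]
  linarith

lemma F_neg_of_le_half (hl : 0 ≤ l) (hu : u ≤ 1 / 2) (hs : 0 < s) (hsq : s ^ 2 ≤ q u)
    (hbound : 1.7321 / 3 * u - (2 * l - 1) / (q u * s) - 1 / (1 + u) ^ 2 < 0)
    (hla : l ≤ a) (hau : a ≤ u) : F a < 0 :=
  (F_le_of_div_lower (hl.trans hla) hau (div_lower_of_le_half hla hau hu hs hsq)).trans_lt hbound

lemma F_neg_of_half_le (hl : 1 / 2 ≤ l) (hs : 0 ≤ s) (hsq : q u ≤ s ^ 2)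
    (hbound : 1.7321 / 3 * u - (2 * l - 1) / (q u * s) - 1 / (1 + u) ^ 2 < 0)
    (hla : l ≤ a) (hau : a ≤ u) : F a < 0 :=
  (F_le_of_div_lower (by linarith) hau (div_lower_of_half_le hl hla hau hs hsq)).trans_lt hbound

lemma F_pos_of_le_half (hl : 0 < l) (hu : u ≤ 1 / 2) (hs : 0 ≤ s) (hsq : q l ≤ s ^ 2)
    (hbound : 0 < 1.732 / 3 * l - (2 * u - 1) / (q l * s) - 1 / (1 + l) ^ 2)
    (hla : l ≤ a) (hau : a ≤ u) : 0 < F a :=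
  hbound.trans_le (le_F_of_div_upper hl hla (div_upper_of_le_half hla hau hu hs hsq))

lemma F_pos_of_half_le (hl : 1 / 2 ≤ l) (hs : 0 < s) (hsq : s ^ 2 ≤ q l)
    (hbound : 0 < 1.732 / 3 * l - (2 * u - 1) / (q l * s) - 1 / (1 + l) ^ 2)
    (hla : l ≤ a) (hau : a ≤ u) : 0 < F a :=
  hbound.trans_le (le_F_of_div_upper (by linarith) hla (div_upper_of_half_le hl hla hau hs hsq))

end Enclosure

lemma F_pos_of_le_eleven_fiftieths {a : ℝ} (ha : 0 < a) (ha' : a ≤ 11 / 50) : 0 < F a := by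
  have hq := q_pos a
  have hq1 : q a ≤ 1 := by unfold q; nlinarith
  have hD : q a * √(q a) ≤ q a := mul_le_of_le_one_right hq.le (sqrt_le_one.2 hq1)
  have hkey : 1 / (1 + a) ^ 2 ≤ (1 - 2 * a) / q a := by
    rw [div_le_div_iff₀ (by positivity) hq]
    unfold q
    nlinarith [mul_nonneg ha.le (show (0 : ℝ) ≤ 1 - 4 * a - 2 * a ^ 2 by nlinarith)]
  have hmid : (1 - 2 * a) / q a ≤ (1 - 2 * a) / (q a * √(q a)) :=
    div_le_div_of_nonneg_left (by linarith) (by positivity) hD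
  have hlin : 0 < √3 / 3 * a := by positivity
  rw [F_eq, show (2 * a - 1) / (q a * √(q a)) = -((1 - 2 * a) / (q a * √(q a))) by ring]
  linarith

lemma F_pos_of_mem_Ioc {a : ℝ} (ha : a ∈ Ioc 0 (3 / 8)) : 0 < F a := by
  obtain ⟨ha0, ha1⟩ := ha
  rcases le_total a (11 / 50) with h₀ | h₀
  · exact F_pos_of_le_eleven_fiftieths ha0 h₀
  rcases le_total a (1883 / 6400) with h₁ | h₁
  · exact F_pos_of_le_half (s := 91017 / 100000) (by norm_num) (by norm_num) (by norm_num)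
      (by norm_num [q]) (by norm_num [q]) h₀ h₁
  rcases le_total a (2233 / 6400) with h₂ | h₂
  · exact F_pos_of_le_half (s := 44507 / 50000) (by norm_num) (by norm_num) (by norm_num)
      (by norm_num [q]) (by norm_num [q]) h₁ h₂
  · exact F_pos_of_le_half (s := 87911 / 100000) (by norm_num) (by norm_num) (by norm_num)
      (by norm_num [q]) (by norm_num [q]) h₂ ha1

lemma F_neg_of_mem_Icc {a : ℝ} (ha : a ∈ Icc (7 / 16) (25 / 16)) : F a < 0 := by
  obtain ⟨ha0, ha1⟩ := ha
  rcases le_total a (961 / 2048) with h₁ | h₁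
  · exact F_neg_of_le_half (s := 86657 / 100000) (by norm_num) (by norm_num) (by norm_num)
      (by norm_num [q]) (by norm_num [q]) ha0 h₁
  rcases le_total a (1 / 2) with h₂ | h₂
  · exact F_neg_of_le_half (s := 43301 / 50000) (by norm_num) (by norm_num) (by norm_num)
      (by norm_num [q]) (by norm_num [q]) h₁ h₂
  rcases le_total a (1315 / 2048) with h₃ | h₃
  · exact F_neg_of_half_le (s := 87761 / 100000) (by norm_num) (by norm_num)
      (by norm_num [q]) (by norm_num [q]) h₂ h₃
  rcases le_total a (1977 / 2048) with h₄ | h₄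
  · exact F_neg_of_half_le (s := 98313 / 100000) (by norm_num) (by norm_num)
      (by norm_num [q]) (by norm_num [q]) h₃ h₄
  rcases le_total a (2669 / 2048) with h₅ | h₅
  · exact F_neg_of_half_le (s := 59059 / 50000) (by norm_num) (by norm_num)
      (by norm_num [q]) (by norm_num [q]) h₄ h₅
  rcases le_total a (1529 / 1024) with h₆ | h₆
  · exact F_neg_of_half_le (s := 32943 / 25000) (by norm_num) (by norm_num)
      (by norm_num [q]) (by norm_num [q]) h₅ h₆
  · exact F_neg_of_half_le (s := 68537 / 50000) (by norm_num) (by norm_num)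
      (by norm_num [q]) (by norm_num [q]) h₆ ha1

lemma F_pos_thirteen_eighths : 0 < F (13 / 8) :=
  F_pos_of_half_le (s := 35493 / 25000) (by norm_num) (by norm_num) (by norm_num [q])
    (by norm_num [q]) le_rfl le_rfl

lemma hasDerivAt_F {x : ℝ} (hx : -1 < x) :
    HasDerivAt F (√3 / 3 - (1 + 8 * x - 8 * x ^ 2) / (2 * q x ^ 2 * √(q x)) + 2 / (1 + x) ^ 3) x := by
  have hq := q_pos x
  have hq' : HasDerivAt q (2 * x - 1) x := by
    have := ((hasDerivAt_pow 2 x).const_add 1).sub (hasDerivAt_id x)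
    exact this.congr_deriv (by ring)
  have hpow := hq'.rpow_const (p := 3 / 2) (Or.inl hq.ne')
  have hnum : HasDerivAt (fun a : ℝ => 2 * a - 1) 2 x := by
    simpa using ((hasDerivAt_id x).const_mul 2).sub_const 1
  have hden : HasDerivAt (fun a : ℝ => (1 + a) ^ 2) (2 * (1 + x)) x := by
    simpa using ((hasDerivAt_id x).const_add 1).fun_pow 2
  have hF : HasDerivAt F _ x := (((hasDerivAt_id x).const_mul (√3 / 3)).fun_sub
    (hnum.fun_div hpow (by positivity))).fun_sub
    ((hasDerivAt_const x (1 : ℝ)).fun_div hden (pow_ne_zero 2 (by linarith)))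
  refine hF.congr_deriv ?_
  rw [show (3 : ℝ) / 2 - 1 = 1 / 2 by norm_num, show (3 : ℝ) / 2 = 1 + 1 / 2 by norm_num,
    rpow_add hq, rpow_one, ← sqrt_eq_rpow]
  field_simp
  unfold q
  ring

lemma continuousOn_F : ContinuousOn F (Ioi (-1)) :=
  fun _ hx => (hasDerivAt_F hx).continuousAt.continuousWithinAt

lemma F_strictAntiOn : StrictAntiOn F (Icc (3 / 8) (7 / 16)) := by
  refine strictAntiOn_of_hasDerivWithinAt_neg (convex_Icc _ _)
    (continuousOn_F.mono fun x hx => by simp only [mem_Ioi]; linarith [hx.1])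
    (fun x hx => (hasDerivAt_F (by rw [interior_Icc] at hx; linarith [hx.1])).hasDerivWithinAt)
    fun x hx => ?_
  rw [interior_Icc] at hx
  obtain ⟨hx₁, hx₂⟩ := hx
  have hq := q_pos x
  have hq' : q x ≤ 49 / 64 := (q_le_q_of_le_of_le_half hx₁.le (by linarith)).trans (by norm_num [q])
  have hs : √(q x) ≤ 7 / 8 := (sqrt_le_left (by norm_num)).2 (by linarith)
  have hmid : 2 ≤ (1 + 8 * x - 8 * x ^ 2) / (2 * q x ^ 2 * √(q x)) := by
    rw [le_div_iff₀ (by positivity)]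
    have : q x ^ 2 * √(q x) ≤ (49 / 64) ^ 2 * (7 / 8) :=
      mul_le_mul (pow_le_pow_left₀ hq.le hq' 2) hs (sqrt_nonneg _) (by positivity)
    nlinarith
  have hlast : 2 / (1 + x) ^ 3 ≤ 0.77 := by
    rw [div_le_iff₀ (by positivity)]
    nlinarith [pow_le_pow_left₀ (by norm_num) (show (11 : ℝ) / 8 ≤ 1 + x by linarith) 3]
  linarith [sqrt_three_bounds]

lemma F_strictMonoOn : StrictMonoOn F (Ici (25 / 16)) := by
  refine strictMonoOn_of_hasDerivWithinAt_pos (convex_Ici _)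
    (continuousOn_F.mono fun x hx => by simp only [mem_Ioi]; linarith [mem_Ici.1 hx])
    (fun x hx => (hasDerivAt_F (by rw [interior_Ici] at hx; linarith [mem_Ioi.1 hx])).hasDerivWithinAt)
    fun x hx => ?_
  rw [interior_Ici, mem_Ioi] at hx
  have hq := q_pos x
  have hmid : (1 + 8 * x - 8 * x ^ 2) / (2 * q x ^ 2 * √(q x)) ≤ 0 :=
    div_nonpos_of_nonpos_of_nonneg (by nlinarith) (by positivity)
  have hlast : 0 < 2 / (1 + x) ^ 3 := by positivity
  have hlin : 0 < √3 / 3 := by positivity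
  linarith

lemma exists_root_mem_Ioo_left : ∃ z ∈ Ioo (3 / 8 : ℝ) (7 / 16), F z = 0 :=
  intermediate_value_Ioo' (by norm_num)
    (continuousOn_F.mono fun x hx => by simp only [mem_Ioi]; linarith [hx.1])
    ⟨F_neg_of_mem_Icc ⟨le_rfl, by norm_num⟩, F_pos_of_mem_Ioc ⟨by norm_num, le_rfl⟩⟩

lemma exists_root_mem_Ioo_right : ∃ z ∈ Ioo (25 / 16 : ℝ) (13 / 8), F z = 0 :=
  intermediate_value_Ioo (by norm_num)
    (continuousOn_F.mono fun x hx => by simp only [mem_Ioi]; linarith [hx.1])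
    ⟨F_neg_of_mem_Icc ⟨by norm_num, le_rfl⟩, F_pos_thirteen_eighths⟩

lemma F_pos_of_lt_left_root {z a : ℝ} (hz : z ∈ Icc (3 / 8) (7 / 16)) (hFz : F z = 0)
    (ha : 0 < a) (haz : a < z) : 0 < F a := by
  rcases le_total a (3 / 8) with h | h
  · exact F_pos_of_mem_Ioc ⟨ha, h⟩
  · exact hFz ▸ F_strictAntiOn ⟨h, by linarith [hz.2]⟩ hz haz

lemma F_neg_of_between_roots {z₁ z₂ a : ℝ} (hz₁ : z₁ ∈ Icc (3 / 8) (7 / 16)) (hFz₁ : F z₁ = 0)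
    (hz₂ : 25 / 16 ≤ z₂) (hFz₂ : F z₂ = 0) (ha₁ : z₁ < a) (ha₂ : a < z₂) : F a < 0 := by
  rcases le_total a (7 / 16) with h | h
  · exact hFz₁ ▸ F_strictAntiOn hz₁ ⟨by linarith [hz₁.1], h⟩ ha₁
  rcases le_total a (25 / 16) with h' | h'
  · exact F_neg_of_mem_Icc ⟨h, h'⟩
  · exact hFz₂ ▸ F_strictMonoOn h' hz₂ ha₂

lemma F_pos_of_right_root_lt {z a : ℝ} (hz : 25 / 16 ≤ z) (hFz : F z = 0) (ha : z < a) :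
    0 < F a :=
  hFz ▸ F_strictMonoOn hz (hz.trans ha.le) ha

lemma eq_or_eq_of_sign_pattern {f : ℝ → ℝ} {z₁ z₂ a : ℝ}
    (h₁ : ∀ x, 0 < x → x < z₁ → 0 < f x) (h₂ : ∀ x, z₁ < x → x < z₂ → f x < 0)
    (h₃ : ∀ x, z₂ < x → 0 < f x) (ha : 0 < a) (hfa : f a = 0) : a = z₁ ∨ a = z₂ := by
  by_contra! hne
  rcases hne.1.lt_or_gt with h | h
  · exact (h₁ a ha h).ne' hfa
  rcases hne.2.lt_or_gt with h' | h'
  · exact (h₂ a h h').ne hfa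
  · exact (h₃ a h').ne' hfa

theorem stmt_5 :
    (let F : ℝ → ℝ := fun a =>
        Real.sqrt 3 / 3 * a - (2*a - 1) / (1 + a^2 - a) ^ ((3:ℝ)/2) - 1 / (1 + a)^2
     ∃ z₁ z₂ : ℝ, 3/8 < z₁ ∧ z₁ < 7/16 ∧ 25/16 < z₂ ∧ z₂ < 13/8 ∧
       F z₁ = 0 ∧ F z₂ = 0 ∧
       (∀ a : ℝ, 0 < a → F a = 0 → a = z₁ ∨ a = z₂) ∧
       (∀ a : ℝ, z₁ < a → a < z₂ → F a < 0) ∧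
       (∀ a : ℝ, 0 < a → a < z₁ → 0 < F a) ∧
       (∀ a : ℝ, z₂ < a → 0 < F a)) := by
  obtain ⟨z₁, ⟨h₁, h₁'⟩, hFz₁⟩ := exists_root_mem_Ioo_left
  obtain ⟨z₂, ⟨h₂, h₂'⟩, hFz₂⟩ := exists_root_mem_Ioo_right
  have hz₁ : z₁ ∈ Icc (3 / 8) (7 / 16) := ⟨h₁.le, h₁'.le⟩
  have left := fun a => F_pos_of_lt_left_root (a := a) hz₁ hFz₁
  have middle := fun a => F_neg_of_between_roots (a := a) hz₁ hFz₁ h₂.le hFz₂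
  have right := fun a => F_pos_of_right_root_lt (a := a) h₂.le hFz₂
  exact ⟨z₁, z₂, h₁, h₁', h₂, h₂', hFz₁, hFz₂,
    fun a => eq_or_eq_of_sign_pattern left middle right, middle, left, right⟩
end

section
/- The polynomial q(a) = 2a¹⁰ − (2+√3)a⁹ − (2√3−2)a⁸ − (2√3−2)a⁷ − (12√3+2)a⁶ − (13√3−4)a⁵ − (12√3+2)a⁴ − (2√3−2)a³ − (2√3−2)a² − (2+√3)a + 2 has exactly one zero in the interval [1,∞), and this zero lies in (46/16, 47/16). -/
/-!
Write `q = qs √3`, where `qs s` is `q` with `√3` replaced by a parameter `s`. For `a > 0`, `qs s a`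
and its derivative `dqs s a` are strictly decreasing in `s`, so replacing `√3` by the rational
bounds `433/250 < √3 < 17321/10000` reduces every sign condition to one on a polynomial with
rational coefficients, certified by a nonnegative Bernstein (on a bounded interval) or Taylor (on a
half-line) expansion. This shows `q < 0` on `[1, 23/8]`, `q > 0` on `[47/16, ∞)` and `q' > 0` on
`(23/8, 47/16)`, hence `q` has a unique zero in `[1, ∞)`, lying in `(23/8, 47/16)`.
-/

open Real Set

section SignCertificates

variable {a x : ℝ} {n : ℕ} {c : Fin (n + 1) → ℝ}

theorem sum_bernstein_nonneg {b : ℝ} (hax : a ≤ x) (hxb : x ≤ b) (hc : ∀ k, 0 ≤ c k) :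
    0 ≤ ∑ k, c k * (x - a) ^ (k : ℕ) * (b - x) ^ (n - k) := by
  have := sub_nonneg.2 hax
  have := sub_nonneg.2 hxb
  exact Finset.sum_nonneg fun k _ => by have := hc k; positivity

theorem sum_taylor_nonneg (hax : a ≤ x) (hc : ∀ k, 0 ≤ c k) :
    0 ≤ ∑ k, c k * (x - a) ^ (k : ℕ) := by
  have := sub_nonneg.2 hax
  exact Finset.sum_nonneg fun k _ => by have := hc k; positivity

end SignCertificates

def qs (s a : ℝ) : ℝ :=
  2*a^10 - (2 + s)*a^9 - (2*s - 2)*a^8 - (2*s - 2)*a^7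
    - (12*s + 2)*a^6 - (13*s - 4)*a^5 - (12*s + 2)*a^4
    - (2*s - 2)*a^3 - (2*s - 2)*a^2 - (2 + s)*a + 2

def dqs (s a : ℝ) : ℝ :=
  20*a^9 - 9*(2 + s)*a^8 - 8*(2*s - 2)*a^7 - 7*(2*s - 2)*a^6
    - 6*(12*s + 2)*a^5 - 5*(13*s - 4)*a^4 - 4*(12*s + 2)*a^3
    - 3*(2*s - 2)*a^2 - 2*(2*s - 2)*a - (2 + s)

open Polynomial in
theorem hasDerivAt_qs (s a : ℝ) : HasDerivAt (qs s) (dqs s a) a := by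
  have h := (C 2 * X^10 - C (2 + s) * X^9 - C (2*s - 2) * X^8 - C (2*s - 2) * X^7
    - C (12*s + 2) * X^6 - C (13*s - 4) * X^5 - C (12*s + 2) * X^4
    - C (2*s - 2) * X^3 - C (2*s - 2) * X^2 - C (2 + s) * X + C 2 : ℝ[X]).hasDerivAt a
  simp only [eval_add, eval_sub, eval_mul, eval_C, eval_pow, eval_X, derivative_add,
    derivative_sub, derivative_mul, derivative_C, derivative_X_pow, derivative_X, eval_zero,
    eval_one] at h
  exact h.congr_deriv (by simp only [dqs]; norm_num; ring)

theorem continuous_qs (s : ℝ) : Continuous (qs s) :=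
  continuous_iff_continuousAt.2 fun a => (hasDerivAt_qs s a).continuousAt

theorem qs_lt_qs_of_lt {s t a : ℝ} (ha : 0 < a) (hst : s < t) : qs t a < qs s a := by
  have key : qs s a - qs t a =
      (t - s) * (a^9 + 2*a^8 + 2*a^7 + 12*a^6 + 13*a^5 + 12*a^4 + 2*a^3 + 2*a^2 + a) := by
    unfold qs; ring
  have : 0 < qs s a - qs t a := by rw [key]; have := sub_pos.2 hst; positivity
  linarith

theorem dqs_lt_dqs_of_lt {s t a : ℝ} (ha : 0 < a) (hst : s < t) : dqs t a < dqs s a := by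
  have key : dqs s a - dqs t a =
      (t - s) * (9*a^8 + 16*a^7 + 14*a^6 + 72*a^5 + 65*a^4 + 48*a^3 + 6*a^2 + 4*a + 1) := by
    unfold dqs; ring
  have : 0 < dqs s a - dqs t a := by rw [key]; have := sub_pos.2 hst; positivity
  linarith

theorem qs_lower_nonpos {u : ℝ} (h1 : 1 ≤ u) (h2 : u ≤ 23/8) : qs (433/250) u ≤ 0 := by
  have hq : qs (433/250) u = -∑ k : Fin 11, ![1094679789568/8009033203125,
      4241884184576/1601806640625, 12187372355584/533935546875, 61515187093504/533935546875,
      66976808566784/177978515625, 2209417345318912/2669677734375, 218935526764544/177978515625,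
      638955897332224/533935546875, 370752361720864/533935546875, 294878392434236/1601806640625,
      3655838184418/8009033203125] k * (u - 1) ^ (k : ℕ) * (23/8 - u) ^ (10 - (k : ℕ)) := by
    simp only [qs, Fin.sum_univ_succ, Fin.sum_univ_zero, Matrix.cons_val_zero,
      Matrix.cons_val_succ, Fin.val_zero, Fin.val_succ]
    ring
  rw [hq, neg_nonpos]
  refine sum_bernstein_nonneg h1 h2 fun k => ?_
  fin_cases k <;> norm_num

theorem qs_upper_nonneg {u : ℝ} (h : 47/16 ≤ u) : 0 ≤ qs (17321/10000) u := by
  have hq : qs (17321/10000) u = ∑ k : Fin 11, ![2455066092710791323/687194767360000,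
      3077123487195680091/42949672960000, 242915715954402591/1342177280000,
      9075212736488103/41943040000, 811701797323513/5242880000, 23742979758669/327680000,
      117347276723/5120000, 3128425043/640000, 21647039/32000, 550179/10000, 2] k
      * (u - 47/16) ^ (k : ℕ) := by
    simp only [qs, Fin.sum_univ_succ, Fin.sum_univ_zero, Matrix.cons_val_zero,
      Matrix.cons_val_succ, Fin.val_zero, Fin.val_succ]
    ring
  rw [hq]
  refine sum_taylor_nonneg h fun k => ?_
  fin_cases k <;> norm_num

theorem dqs_upper_nonneg {u : ℝ} (h1 : 23/8 ≤ u) (h2 : u ≤ 47/16) :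
    0 ≤ dqs (17321/10000) u := by
  have hq : dqs (17321/10000) u = ∑ k : Fin 10, ![88324057828024064/25,
      20645329537185404672/625, 85761775509949566208/625, 207749321467298825728/625,
      323416525569387798432/625, 335552668365990571104/625, 371244219188848720,
      4124481807253658304/25, 5344489704188702091/125, 3077123487195680091/625] k
      * (u - 23/8) ^ (k : ℕ) * (47/16 - u) ^ (9 - (k : ℕ)) := by
    simp only [dqs, Fin.sum_univ_succ, Fin.sum_univ_zero, Matrix.cons_val_zero,
      Matrix.cons_val_succ, Fin.val_zero, Fin.val_succ]
    ring
  rw [hq]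
  refine sum_bernstein_nonneg h1 h2 fun k => ?_
  fin_cases k <;> norm_num

theorem lt_sqrt_three : (433/250 : ℝ) < √3 := by
  rw [lt_sqrt (by norm_num)]; norm_num

theorem sqrt_three_lt : √3 < 17321/10000 := by
  rw [sqrt_lt' (by norm_num)]; norm_num

theorem qs_sqrt_three_neg {u : ℝ} (h1 : 1 ≤ u) (h2 : u ≤ 23/8) : qs √3 u < 0 :=
  (qs_lt_qs_of_lt (by linarith) lt_sqrt_three).trans_le (qs_lower_nonpos h1 h2)

theorem qs_sqrt_three_pos {u : ℝ} (h : 47/16 ≤ u) : 0 < qs √3 u :=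
  (qs_upper_nonneg h).trans_lt (qs_lt_qs_of_lt (by linarith) sqrt_three_lt)

theorem strictMonoOn_qs_sqrt_three : StrictMonoOn (qs √3) (Icc (23/8) (47/16)) := by
  refine strictMonoOn_of_deriv_pos (convex_Icc _ _) (continuous_qs _).continuousOn fun u hu => ?_
  rw [interior_Icc] at hu
  rw [(hasDerivAt_qs _ u).deriv]
  exact (dqs_upper_nonneg hu.1.le hu.2.le).trans_lt
    (dqs_lt_dqs_of_lt (by linarith [hu.1]) sqrt_three_lt)

theorem mem_Ioo_of_qs_sqrt_three_eq_zero {u : ℝ} (h1 : 1 ≤ u) (h0 : qs √3 u = 0) :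
    u ∈ Ioo (23/8) (47/16) := by
  constructor
  · by_contra! h
    exact (qs_sqrt_three_neg h1 h).ne h0
  · by_contra! h
    exact (qs_sqrt_three_pos h).ne' h0

theorem stmt_7 :
    (let q : ℝ → ℝ := fun a =>
      2*a^10 - (2 + Real.sqrt 3)*a^9 - (2*Real.sqrt 3 - 2)*a^8 - (2*Real.sqrt 3 - 2)*a^7
        - (12*Real.sqrt 3 + 2)*a^6 - (13*Real.sqrt 3 - 4)*a^5 - (12*Real.sqrt 3 + 2)*a^4
        - (2*Real.sqrt 3 - 2)*a^3 - (2*Real.sqrt 3 - 2)*a^2 - (2 + Real.sqrt 3)*a + 2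
     ∃! u : ℝ, 1 ≤ u ∧ q u = 0) ∧
    (∀ u : ℝ, 1 ≤ u →
      (2*u^10 - (2 + Real.sqrt 3)*u^9 - (2*Real.sqrt 3 - 2)*u^8 - (2*Real.sqrt 3 - 2)*u^7
        - (12*Real.sqrt 3 + 2)*u^6 - (13*Real.sqrt 3 - 4)*u^5 - (12*Real.sqrt 3 + 2)*u^4
        - (2*Real.sqrt 3 - 2)*u^3 - (2*Real.sqrt 3 - 2)*u^2 - (2 + Real.sqrt 3)*u + 2) = 0 →
      46/16 < u ∧ u < 47/16) := by
  show (∃! u, 1 ≤ u ∧ qs √3 u = 0) ∧ ∀ u, 1 ≤ u → qs √3 u = 0 → 46/16 < u ∧ u < 47/16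
  obtain ⟨c, hc, hc0⟩ : ∃ c ∈ Ioo (23/8 : ℝ) (47/16), qs √3 c = 0 :=
    intermediate_value_Ioo (by norm_num) (continuous_qs _).continuousOn
      ⟨qs_sqrt_three_neg (by norm_num) le_rfl, qs_sqrt_three_pos le_rfl⟩
  refine ⟨⟨c, ⟨by linarith [hc.1], hc0⟩, fun v ⟨hv1, hv0⟩ => ?_⟩, fun u hu h0 => ?_⟩
  · exact strictMonoOn_qs_sqrt_three.injOn
      (Ioo_subset_Icc_self (mem_Ioo_of_qs_sqrt_three_eq_zero hv1 hv0)) (Ioo_subset_Icc_self hc)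
      (hv0.trans hc0.symm)
  · obtain ⟨hlo, hhi⟩ := mem_Ioo_of_qs_sqrt_three_eq_zero hu h0
    exact ⟨by linarith, hhi⟩
end

section
/- For n = 3, the only solution of H(a) = a with a > 0 is a = 1, where H(a) = a²·F(a)/G(a), F(a) = (√3/3)a − (2a−1)/(1+a²−a)^{3/2} − 1/(1+a)², G(a) = √3/3 − a³·((2−a)/(1+a²−a)^{3/2} + 1/(1+a)²), considering only a with G(a) ≠ 0. -/
open Real

theorem stmt_8 (a : ℝ) (ha : 0 < a) :
    (let F : ℝ → ℝ := fun x =>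
        Real.sqrt 3 / 3 * x - (2*x - 1) / (1 + x^2 - x) ^ ((3:ℝ)/2) - 1 / (1 + x)^2
     let G : ℝ → ℝ := fun x =>
        Real.sqrt 3 / 3 - x^3 * ((2 - x) / (1 + x^2 - x) ^ ((3:ℝ)/2) + 1 / (1 + x)^2)
     let H : ℝ → ℝ := fun x => x^2 * F x / G x
     G a ≠ 0 → (H a = a ↔ a = 1)) := by
  intro F G H hG
  have ha1 : (0:ℝ) < 1 + a := by linarith
  have hQ : (0:ℝ) < 1 + a^2 - a := by nlinarith [sq_nonneg (a-1)]
  set r := Real.sqrt (1 + a^2 - a) with hrdef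
  have hr0 : 0 < r := Real.sqrt_pos.mpr hQ
  have hr2 : r^2 = 1 + a^2 - a := Real.sq_sqrt hQ.le
  have hpow : (1 + a^2 - a) ^ ((3:ℝ)/2) = r^3 := by
    rw [hrdef, Real.sqrt_eq_rpow, ← Real.rpow_natCast ((1+a^2-a) ^ ((1:ℝ)/2)) 3,
      ← Real.rpow_mul hQ.le]
    norm_num
  have h3 : Real.sqrt 3 ^ 2 = 3 := Real.sq_sqrt (by norm_num)
  have h3p : 0 < Real.sqrt 3 := Real.sqrt_pos.mpr (by norm_num)
  set s := Real.sqrt 3 with hsdef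
  -- key positivity
  have ht : 0 < s * (a+1) * r := by positivity
  have htsq : (3*a)^2 < (s * (a+1) * r)^2 := by
    have hexp : (s * (a+1) * r)^2 = 3 * (a+1)^2 * (1 + a^2 - a) := by
      rw [mul_pow, mul_pow, h3, hr2]
    rw [hexp]
    nlinarith [sq_nonneg (a^2-1), mul_pos ha hQ]
  have h1 : 3*a < s * (a+1) * r := lt_of_pow_lt_pow_left₀ 2 ht.le htsq
  have hB : 0 < s/3*(a+1) - a/r + a/(1+a) := by
    have h2 : a/r < s/3*(a+1) := by
      rw [div_lt_iff₀ hr0]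
      nlinarith [h1]
    have h4 : 0 < a/(1+a) := by positivity
    linarith
  have key : a^2 * F a - a * G a = a * (a-1) * (s/3*(a+1) - a/r + a/(1+a)) := by
    simp only [F, G, hpow]
    have hr3 : r^3 = (1 + a^2 - a) * r := by rw [pow_succ, hr2]
    rw [hr3, ← hsdef]
    field_simp
    ring
  simp only [H]
  rw [div_eq_iff hG]
  constructor
  · intro h
    have h0 : a * (a-1) * (s/3*(a+1) - a/r + a/(1+a)) = 0 := by
      linear_combination h - key
    rcases mul_eq_zero.mp h0 with h' | h'
    · rcases mul_eq_zero.mp h' with h'' | h''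
      · linarith
      · linarith
    · linarith
  · intro h
    subst h
    linear_combination key
end

section
/- The equation (√3/3)(a+1) + a/(1+a) = a/(a²−a+1)^{1/2} has no solution with a > 0. -/
open Real

theorem stmt_9 (a : ℝ) (ha : 0 < a) :
    Real.sqrt 3 / 3 * (a + 1) + a / (1 + a) ≠ a / Real.sqrt (a^2 - a + 1) := by
  set t := Real.sqrt a with ht
  have ht0 : 0 < t := Real.sqrt_pos.mpr ha
  have ht2 : t ^ 2 = a := Real.sq_sqrt ha.le
  have hs : Real.sqrt a ≤ Real.sqrt (a^2 - a + 1) := by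
    apply Real.sqrt_le_sqrt; nlinarith [sq_nonneg (a - 1)]
  have hrhs : a / Real.sqrt (a^2 - a + 1) ≤ t := by
    calc a / Real.sqrt (a^2 - a + 1) ≤ a / t := by
          apply div_le_div_of_nonneg_left ha.le ht0 hs
      _ = t := by rw [← ht2]; field_simp
  have h3 : (1:ℝ)/2 < Real.sqrt 3 / 3 := by
    have : (1.7:ℝ) < Real.sqrt 3 := by
      have := Real.sq_sqrt (by norm_num : (3:ℝ) ≥ 0)
      nlinarith [Real.sqrt_nonneg 3]
    linarith
  have hamgm : 2 * t ≤ a + 1 := by nlinarith [sq_nonneg (t - 1)]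
  have hlhs : t < Real.sqrt 3 / 3 * (a + 1) + a / (1 + a) := by
    have h1 : (1/2 : ℝ) * (a + 1) < Real.sqrt 3 / 3 * (a + 1) := by
      apply mul_lt_mul_of_pos_right h3; linarith
    have h2 : a / (1 + a) > 0 := div_pos ha (by linarith)
    nlinarith
  intro h
  rw [h] at hlhs
  linarith
end

section
/- For a > 1 and 0 < b ≤ 1, the quantity (a−b)²(1+a²+2ab)⁵ − (a+b)²(1+a²−2ab)⁵ is strictly positive. -/
theorem stmt_10 (a b : ℝ) (ha : 1 < a) (hb0 : 0 < b) (hb1 : b ≤ 1) :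
    0 < (a - b)^2 * (1 + a^2 + 2*a*b)^5 - (a + b)^2 * (1 + a^2 - 2*a*b)^5 := by
  set u : ℝ := (a - b)^2 with hu
  set v : ℝ := (a + b)^2 with hv
  set c : ℝ := 1 - b^2 with hc
  have hupos : 0 < u := by rw [hu]; nlinarith
  have hvpos : 0 < v := by rw [hv]; nlinarith
  have hcnn : 0 ≤ c := by rw [hc]; nlinarith
  have huvc : c^2 < u * v := by
    have h1 : u * v = (a^2 - b^2)^2 := by rw [hu, hv]; ring
    have h2 : (0:ℝ) ≤ 1 - b^2 := hcnn
    have h3 : 1 - b^2 < a^2 - b^2 := by nlinarith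
    nlinarith
  have hB : 0 < u*v*(u+v)*(u^2+v^2) + 5*c*(u*v)*(u^2+u*v+v^2) + 10*c^2*(u*v)*(u+v)
      + c^3*(10*(u*v) - c^2) := by
    have huv : 0 < u * v := mul_pos hupos hvpos
    have t1 : 0 < u*v*(u+v)*(u^2+v^2) := by positivity
    have t2 : 0 ≤ 5*c*(u*v)*(u^2+u*v+v^2) := by positivity
    have t3 : 0 ≤ 10*c^2*(u*v)*(u+v) := by positivity
    have t4 : 0 ≤ c^3*(10*(u*v) - c^2) := by
      apply mul_nonneg (by positivity)
      nlinarith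
    linarith
  have hvu : 0 < v - u := by rw [hu, hv]; nlinarith
  have hid : (a - b)^2 * (1 + a^2 + 2*a*b)^5 - (a + b)^2 * (1 + a^2 - 2*a*b)^5
      = (v - u) * (u*v*(u+v)*(u^2+v^2) + 5*c*(u*v)*(u^2+u*v+v^2) + 10*c^2*(u*v)*(u+v)
      + c^3*(10*(u*v) - c^2)) := by
    rw [hu, hv, hc]; ring
  rw [hid]
  exact mul_pos hvu hB
end

section
/- For even n ≥ 4, the function g₂(a) = Σ_{k=1}^{n} cos θ_k/(1+a² − 2a·cos θ_k)^{3/2}, with θ_k = (2k−1)π/n, is strictly decreasing on (1, ∞). -/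
/-!
Since `n = 2m` is even, `θ_{k+m} = θ_k + π`, so the summands pair up into
`g(c, a) + g(-c, a)` with `c = cos θ_k`, `|c| < 1`, where `g(c, a) = c / (1 + a² - 2ac)^{3/2}`.
The `a`-derivative of such a pair is
`-3c ((a - c) / (1 + a² - 2ac)^{5/2} - (a + c) / (1 + a² + 2ac)^{5/2})`,
and for `0 < c < 1` the bracket is positive: after squaring this is a polynomial inequality whose
difference is a polynomial with positive coefficients in `a`, `c`, `a² - 1` and `1 - c²`.
So every pair is antitone on `(1, ∞)` (it is even in `c`), and the pair with
`c = cos (π / n) > 0`, which needs `n > 2`, is strictly antitone.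
-/

open Real Finset Set

noncomputable def g₂Term (c a : ℝ) : ℝ := c / (1 + a ^ 2 - 2 * a * c) ^ ((3 : ℝ) / 2)

lemma one_add_sq_sub_two_mul_pos {c : ℝ} (hc : |c| < 1) (a : ℝ) :
    0 < 1 + a ^ 2 - 2 * a * c := by
  have : c ^ 2 < 1 := (sq_lt_one_iff_abs_lt_one c).2 hc
  nlinarith [sq_nonneg (a - c)]

lemma hasDerivAt_g₂Term {c : ℝ} (hc : |c| < 1) (a : ℝ) :
    HasDerivAt (g₂Term c) (-(3 * c * (a - c)) / (1 + a ^ 2 - 2 * a * c) ^ ((5 : ℝ) / 2)) a := by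
  have hD : HasDerivAt (fun x : ℝ => 1 + x ^ 2 - 2 * x * c) (2 * a - 2 * c) a := by
    simpa using
      ((hasDerivAt_pow 2 a).const_add 1).fun_sub (((hasDerivAt_id a).const_mul 2).mul_const c)
  have hpow :=
    (hD.rpow_const (p := -(3 / 2)) (Or.inl (one_add_sq_sub_two_mul_pos hc a).ne')).const_mul c
  have hterm : g₂Term c = fun x => c * (1 + x ^ 2 - 2 * x * c) ^ (-(3 / 2) : ℝ) := by
    ext x
    rw [g₂Term, rpow_neg (one_add_sq_sub_two_mul_pos hc x).le, div_eq_mul_inv]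
  rw [hterm]
  refine hpow.congr_deriv ?_
  rw [show (-(3 / 2) - 1 : ℝ) = -(5 / 2) by norm_num,
    rpow_neg (one_add_sq_sub_two_mul_pos hc a).le]
  ring

lemma rpow_five_halves_sq {x : ℝ} (hx : 0 ≤ x) : (x ^ ((5 : ℝ) / 2)) ^ 2 = x ^ 5 := by
  rw [← rpow_natCast, ← rpow_mul hx]
  norm_num

lemma sq_add_mul_pow_five_lt_sq_sub_mul_pow_five {a c : ℝ} (ha : 1 < a) (hc0 : 0 < c)
    (hc1 : c < 1) :
    (a + c) ^ 2 * (1 + a ^ 2 - 2 * a * c) ^ 5 < (a - c) ^ 2 * (1 + a ^ 2 + 2 * a * c) ^ 5 := by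
  -- `u` and `v` are introduced as atoms so that `positivity` sees their signs
  obtain ⟨u, hu, hu_def⟩ : ∃ u, 0 < u ∧ a ^ 2 - 1 = u := ⟨a ^ 2 - 1, by nlinarith, rfl⟩
  obtain ⟨v, hv, hv_def⟩ : ∃ v, 0 < v ∧ 1 - c ^ 2 = v := ⟨1 - c ^ 2, by nlinarith, rfl⟩
  have ha0 : 0 < a := by linarith
  have key : (a - c) ^ 2 * (1 + a ^ 2 + 2 * a * c) ^ 5 - (a + c) ^ 2 * (1 + a ^ 2 - 2 * a * c) ^ 5
      = 4 * a * c * (16 * v ^ 2 * (3 + c ^ 2) + 128 * u * v + 32 * u * v ^ 2 * (1 + c ^ 2)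
        + 64 * u ^ 2 + 8 * u ^ 2 * v * (15 + 2 * v * (1 + c ^ 2) + 7 * c ^ 2) + 96 * u ^ 3
        + 24 * u ^ 3 * v * (1 + c ^ 2) + 5 * u ^ 4 * (7 + c ^ 2) + 4 * u ^ 5) := by
    subst hu_def hv_def; ring
  have : 0 < 4 * a * c * (16 * v ^ 2 * (3 + c ^ 2) + 128 * u * v + 32 * u * v ^ 2 * (1 + c ^ 2)
        + 64 * u ^ 2 + 8 * u ^ 2 * v * (15 + 2 * v * (1 + c ^ 2) + 7 * c ^ 2) + 96 * u ^ 3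
        + 24 * u ^ 3 * v * (1 + c ^ 2) + 5 * u ^ 4 * (7 + c ^ 2) + 4 * u ^ 5) := by
    positivity
  linarith

lemma add_div_rpow_lt_sub_div_rpow {a c : ℝ} (ha : 1 < a) (hc0 : 0 < c) (hc1 : c < 1) :
    (a + c) / (1 + a ^ 2 + 2 * a * c) ^ ((5 : ℝ) / 2)
      < (a - c) / (1 + a ^ 2 - 2 * a * c) ^ ((5 : ℝ) / 2) := by
  have hc : |c| < 1 := abs_lt.2 ⟨by linarith, hc1⟩
  have hminus := one_add_sq_sub_two_mul_pos hc a
  have hplus : 0 < 1 + a ^ 2 + 2 * a * c := by nlinarith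
  rw [div_lt_div_iff₀ (rpow_pos_of_pos hplus _) (rpow_pos_of_pos hminus _)]
  refine lt_of_pow_lt_pow_left₀ 2 (mul_nonneg (by linarith) (rpow_nonneg hplus.le _)) ?_
  rw [mul_pow, mul_pow, rpow_five_halves_sq hminus.le, rpow_five_halves_sq hplus.le]
  exact sq_add_mul_pow_five_lt_sq_sub_mul_pow_five ha hc0 hc1

lemma strictAntiOn_g₂Term_add_neg {c : ℝ} (hc0 : 0 < c) (hc1 : c < 1) :
    StrictAntiOn (fun a => g₂Term c a + g₂Term (-c) a) (Ioi 1) := by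
  have hc : |c| < 1 := abs_lt.2 ⟨by linarith, hc1⟩
  have hc' : |-c| < 1 := by rwa [abs_neg]
  have hderiv (a : ℝ) := (hasDerivAt_g₂Term hc a).add (hasDerivAt_g₂Term hc' a)
  refine strictAntiOn_of_hasDerivWithinAt_neg (convex_Ioi 1)
    (fun a _ => (hderiv a).continuousAt.continuousWithinAt)
    (fun a _ => (hderiv a).hasDerivWithinAt) fun a ha => ?_
  rw [interior_Ioi] at ha
  have h := add_div_rpow_lt_sub_div_rpow ha hc0 hc1
  have e : 1 + a ^ 2 - 2 * a * -c = 1 + a ^ 2 + 2 * a * c := by ring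
  rw [e]
  calc _ = -(3 * c) * ((a - c) / (1 + a ^ 2 - 2 * a * c) ^ ((5 : ℝ) / 2)
        - (a + c) / (1 + a ^ 2 + 2 * a * c) ^ ((5 : ℝ) / 2)) := by ring
    _ < 0 := mul_neg_of_neg_of_pos (by linarith) (sub_pos.2 h)

lemma antitoneOn_g₂Term_add_neg {c : ℝ} (hc : |c| < 1) :
    AntitoneOn (fun a => g₂Term c a + g₂Term (-c) a) (Ioi 1) := by
  rcases lt_trichotomy c 0 with hneg | rfl | hpos
  · simpa only [neg_neg, add_comm] using
      (strictAntiOn_g₂Term_add_neg (neg_pos.2 hneg) (by linarith [neg_abs_le c])).antitoneOn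
  · simp [g₂Term, antitoneOn_const]
  · exact (strictAntiOn_g₂Term_add_neg hpos (lt_of_le_of_lt (le_abs_self c) hc)).antitoneOn

lemma Finset.strictAntiOn_sum {ι : Type*} {s : Finset ι} {D : Set ℝ} {f : ι → ℝ → ℝ}
    (hf : ∀ i ∈ s, AntitoneOn (f i) D) {i₀ : ι} (hi₀ : i₀ ∈ s)
    (hstrict : StrictAntiOn (f i₀) D) :
    StrictAntiOn (fun x => ∑ i ∈ s, f i x) D := fun _ hx _ hy hxy =>
  Finset.sum_lt_sum (fun i hi => hf i hi hx hy hxy.le) ⟨i₀, hi₀, hstrict hx hy hxy⟩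

theorem strictAntiOn_sum_g₂Term {m : ℕ} (c : ℕ → ℝ) (hm : 0 < m)
    (hanti : ∀ k, c (m + k) = -c k) (habs : ∀ k < m, |c k| < 1) (hpos : 0 < c 0) :
    StrictAntiOn (fun a => ∑ k ∈ range (m + m), g₂Term (c k) a) (Ioi 1) := by
  simp only [sum_range_add, hanti, ← sum_add_distrib]
  exact Finset.strictAntiOn_sum (fun k hk => antitoneOn_g₂Term_add_neg (habs k (mem_range.1 hk)))
    (mem_range.2 hm) (strictAntiOn_g₂Term_add_neg hpos (abs_lt.1 (habs 0 hm)).2)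

lemma cos_odd_mul_pi_div_add_pi (m k : ℕ) (hm : 0 < m) :
    cos ((2 * ((m + k : ℕ) : ℝ) + 1) * π / ((m + m : ℕ) : ℝ))
      = -cos ((2 * (k : ℝ) + 1) * π / ((m + m : ℕ) : ℝ)) := by
  have : (m : ℝ) ≠ 0 := by positivity
  rw [← cos_add_pi]
  congr 1
  push_cast
  field_simp
  ring

lemma abs_cos_odd_mul_pi_div_lt_one {m k : ℕ} (hk : k < m) :
    |cos ((2 * (k : ℝ) + 1) * π / ((m + m : ℕ) : ℝ))| < 1 := by
  have hm : (0 : ℝ) < m + m := by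
    have : (0 : ℝ) < m := by exact_mod_cast (by omega : 0 < m)
    linarith
  have hk' : (2 * (k : ℝ) + 1) < m + m := by exact_mod_cast (by omega : 2 * k + 1 < m + m)
  have hθ0 : 0 < (2 * (k : ℝ) + 1) * π / ((m + m : ℕ) : ℝ) :=
    div_pos (by positivity) (by push_cast; exact hm)
  have hθπ : (2 * (k : ℝ) + 1) * π / ((m + m : ℕ) : ℝ) < π := by
    push_cast
    rw [div_lt_iff₀ hm]
    nlinarith [pi_pos]
  refine abs_lt.2 ⟨?_, ?_⟩
  · simpa using cos_lt_cos_of_nonneg_of_le_pi hθ0.le le_rfl hθπ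
  · simpa using cos_lt_cos_of_nonneg_of_le_pi le_rfl hθπ.le hθ0

lemma cos_pi_div_pos {n : ℕ} (hn : 2 < n) : 0 < cos (π / n) := by
  have hn' : (2 : ℝ) < n := by exact_mod_cast hn
  apply cos_pos_of_mem_Ioo
  constructor
  · linarith [pi_pos, div_pos pi_pos (by linarith : (0 : ℝ) < n)]
  · exact div_lt_div_of_pos_left pi_pos two_pos hn'

theorem stmt_13 (n : ℕ) (hn : 4 ≤ n) (hev : Even n) :
    StrictAntiOn (fun a : ℝ => ∑ k ∈ Finset.range n,
        Real.cos ((2*(k : ℝ)+1) * Real.pi / n) /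
          (1 + a^2 - 2*a*Real.cos ((2*(k : ℝ)+1) * Real.pi / n)) ^ ((3:ℝ)/2))
      (Set.Ioi 1) := by
  obtain ⟨m, rfl⟩ := hev
  exact strictAntiOn_sum_g₂Term (fun k => cos ((2 * (k : ℝ) + 1) * π / ((m + m : ℕ) : ℝ)))
    (by omega) (cos_odd_mul_pi_div_add_pi m · (by omega))
    (fun _ hk => abs_cos_odd_mul_pi_div_lt_one hk)
    (by simpa using cos_pi_div_pos (n := m + m) (by omega))
end

section
/- For even n ≥ 4 and m = n/2, g₂(1) > g₁(1), where g₁(1) = (3/8)Σ_{k=1}^{n−1} 1/sin(kπ/n) and g₂(1) = (1/4)Σ_{k=1}^{m} cos θ_k/sin³(θ_k/2), θ_k = (2k−1)π/n. -/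
/-!
Jordan's inequality `sin x ≥ 2x/π` gives `sin (kπ/n) ≥ 2/n` for `1 ≤ k ≤ n - 1`, so the left-hand
sum is at most `(n - 1) n / 2`, quadratic in `n`. On the right, `cos θ = 1 - 2 sin² (θ/2)` turns each
term into `φ (sin (θ/2))` with `φ s = (1 - 2 s²) / s³`, which is antitone on `(0, 1]`. Hence every
term is at least `φ 1 = -1`, while the first one, with `sin (π/2n) ≤ π/2n`, is at least
`φ (π/2n) = 8n³/π³ - 4n/π`, which is cubic in `n` and wins for `n ≥ 4`.
-/

open Real Finset

lemma two_div_le_sin_mul_pi_div {n j : ℝ} (hj : 1 ≤ j) (hjn : j ≤ n - 1) :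
    2 / n ≤ sin (j * π / n) := by
  have hn : 0 < n := by linarith
  wlog hhalf : j * π / n ≤ π / 2 generalizing j
  · have hsymm : (n - j) * π / n = π - j * π / n := by field_simp
    rw [← sin_pi_sub, ← hsymm]
    refine this (by linarith) (by linarith) ?_
    rw [hsymm]
    linarith
  calc 2 / n ≤ 2 / π * (j * π / n) := by
        rw [show 2 / π * (j * π / n) = 2 * j / n by field_simp]
        gcongr
        linarith
    _ ≤ sin (j * π / n) := mul_le_sin (by positivity) hhalf

lemma sum_range_one_div_sin_le (n : ℕ) :
    ∑ k ∈ range (n - 1), 1 / sin ((k + 1 : ℝ) * π / n) ≤ (n - 1 : ℕ) * ((n : ℝ) / 2) := by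
  have hterm : ∀ k ∈ range (n - 1), 1 / sin ((k + 1 : ℝ) * π / n) ≤ n / 2 := by
    intro k hk
    have hkn : (k : ℝ) + 1 ≤ n - 1 := by
      rw [le_sub_iff_add_le]
      exact_mod_cast (by simp at hk; omega : k + 1 + 1 ≤ n)
    have hsin := two_div_le_sin_mul_pi_div (by simp) hkn
    have hn : (0 : ℝ) < n := by linarith [k.cast_nonneg (α := ℝ)]
    calc 1 / sin ((k + 1 : ℝ) * π / n) ≤ 1 / (2 / n) :=
          one_div_le_one_div_of_le (by positivity) hsin
      _ = n / 2 := one_div_div 2 (n : ℝ)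
  simpa using sum_le_card_nsmul _ _ _ hterm

lemma antitoneOn_one_sub_two_mul_sq_div_pow_three :
    AntitoneOn (fun s : ℝ => (1 - 2 * s ^ 2) / s ^ 3) (Set.Ioc 0 1) := by
  rintro s ⟨hs0, hs1⟩ t ⟨ht0, ht1⟩ hst
  dsimp only
  rw [div_le_div_iff₀ (by positivity) (by positivity)]
  have hfactor : (1 - 2 * s ^ 2) * t ^ 3 - (1 - 2 * t ^ 2) * s ^ 3
      = (t - s) * (t ^ 2 * (1 - s ^ 2) + s ^ 2 * (1 - t ^ 2) + t * s) := by ring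
  have hpos : 0 ≤ t ^ 2 * (1 - s ^ 2) + s ^ 2 * (1 - t ^ 2) + t * s := by
    have : s ^ 2 ≤ 1 := by nlinarith
    have : t ^ 2 ≤ 1 := by nlinarith
    positivity
  nlinarith [mul_nonneg (sub_nonneg.mpr hst) hpos]

lemma le_cos_div_sin_half_pow_three {θ t : ℝ} (hθ0 : 0 < θ) (hθ : θ < 2 * π)
    (ht : sin (θ / 2) ≤ t) (ht1 : t ≤ 1) :
    (1 - 2 * t ^ 2) / t ^ 3 ≤ cos θ / sin (θ / 2) ^ 3 := by
  have hs : 0 < sin (θ / 2) := sin_pos_of_pos_of_lt_pi (by positivity) (by linarith)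
  rw [show θ = 2 * (θ / 2) by ring, cos_two_mul_eq_one_sub, mul_div_cancel_left₀ _ two_ne_zero]
  exact antitoneOn_one_sub_two_mul_sq_div_pow_three ⟨hs, sin_le_one _⟩
    ⟨hs.trans_le ht, ht1⟩ ht

lemma sum_range_cos_div_sin_half_pow_three_ge (n m : ℕ) (hm : n = 2 * m) (hm1 : 1 ≤ m) :
    (1 - 2 * (π / n / 2) ^ 2) / (π / n / 2) ^ 3 - ((m : ℝ) - 1) ≤
      ∑ k ∈ range m, cos ((2 * (k : ℝ) + 1) * π / n) / sin ((2 * (k : ℝ) + 1) * π / n / 2) ^ 3 := by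
  have hθ : ∀ k < m, 0 < (2 * (k : ℝ) + 1) * π / n ∧ (2 * (k : ℝ) + 1) * π / n < 2 * π := by
    intro k hk
    have hkn : 2 * (k : ℝ) + 1 < n := by exact_mod_cast (by omega : 2 * k + 1 < n)
    have hn : (0 : ℝ) < n := by linarith [k.cast_nonneg (α := ℝ)]
    exact ⟨by positivity, by rw [div_lt_iff₀ hn]; nlinarith [pi_pos]⟩
  obtain ⟨m, rfl⟩ : ∃ m', m = m' + 1 := ⟨m - 1, by omega⟩
  have htail : ∀ k ∈ range m, -1 ≤ cos ((2 * ((k + 1 : ℕ) : ℝ) + 1) * π / n) /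
      sin ((2 * ((k + 1 : ℕ) : ℝ) + 1) * π / n / 2) ^ 3 := by
    intro k hk
    obtain ⟨h0, h2π⟩ := hθ (k + 1) (by simp at hk; omega)
    convert le_cos_div_sin_half_pow_three h0 h2π (sin_le_one _) le_rfl using 1
    norm_num
  have hhead : (1 - 2 * (π / n / 2) ^ 2) / (π / n / 2) ^ 3 ≤
      cos ((2 * ((0 : ℕ) : ℝ) + 1) * π / n) / sin ((2 * ((0 : ℕ) : ℝ) + 1) * π / n / 2) ^ 3 := by
    obtain ⟨h0, h2π⟩ := hθ 0 (by omega)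
    simp only [Nat.cast_zero, mul_zero, zero_add, one_mul] at h0 h2π ⊢
    have hn : (2 : ℝ) ≤ n := by exact_mod_cast (by omega : 2 ≤ n)
    refine le_cos_div_sin_half_pow_three h0 h2π (sin_le (by positivity)) ?_
    rw [div_div, div_le_one (by positivity)]
    linarith [pi_lt_four]
  have hsum := card_nsmul_le_sum _ _ _ htail
  rw [card_range, nsmul_eq_mul] at hsum
  rw [sum_range_succ']
  push_cast at hsum hhead ⊢
  linarith

lemma three_div_eight_mul_lt_of_four_le (x : ℝ) (hx : 4 ≤ x) :
    3 / 8 * ((x - 1) * (x / 2)) <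
      1 / 4 * ((1 - 2 * (π / x / 2) ^ 2) / (π / x / 2) ^ 3 - (x / 2 - 1)) := by
  have hx0 : 0 < x := by linarith
  have hφ : (1 - 2 * (π / x / 2) ^ 2) / (π / x / 2) ^ 3 = 8 * x ^ 3 / π ^ 3 - 4 * x / π := by
    field_simp
    ring
  -- `3.15 ^ 3 = 250047 / 8000`
  have hcube : 64000 * x ^ 3 / 250047 ≤ 8 * x ^ 3 / π ^ 3 := by
    have : π ^ 3 < (3.15 : ℝ) ^ 3 := pow_lt_pow_left₀ pi_lt_d2 pi_pos.le (by norm_num)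
    rw [div_le_div_iff₀ (by norm_num) (by positivity)]
    nlinarith [pow_pos hx0 3]
  have hlin : 4 * x / π ≤ 4 * x / 3 := by
    gcongr
    exact pi_gt_three.le
  rw [hφ]
  nlinarith [mul_nonneg (mul_nonneg (sub_nonneg.2 hx) (sub_nonneg.2 hx)) (sub_nonneg.2 hx),
    mul_nonneg (sub_nonneg.2 hx) (sub_nonneg.2 hx)]

theorem stmt_14 (n m : ℕ) (hn : 4 ≤ n) (hm : n = 2 * m) :
    (3/8 : ℝ) * ∑ k ∈ Finset.range (n-1), 1 / Real.sin ((k+1 : ℝ) * Real.pi / n)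
      <
    (1/4 : ℝ) * ∑ k ∈ Finset.range m,
        Real.cos ((2*(k : ℝ)+1) * Real.pi / n) /
          (Real.sin ((2*(k : ℝ)+1) * Real.pi / n / 2))^3 := by
  have hm_real : (m : ℝ) = n / 2 := by rw [hm]; push_cast; ring
  calc (3/8 : ℝ) * ∑ k ∈ range (n-1), 1 / sin ((k+1 : ℝ) * π / n)
      ≤ 3 / 8 * (((n : ℝ) - 1) * (n / 2)) := by
        gcongr
        simpa [Nat.cast_sub (by omega : 1 ≤ n)] using sum_range_one_div_sin_le n
    _ < 1 / 4 * ((1 - 2 * (π / n / 2) ^ 2) / (π / n / 2) ^ 3 - ((n : ℝ) / 2 - 1)) :=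
        three_div_eight_mul_lt_of_four_le n (by exact_mod_cast hn)
    _ ≤ _ := by
        gcongr
        simpa [hm_real] using sum_range_cos_div_sin_half_pow_three_ge n m hm (by omega)
end

section
/- For n = 3, on the interval (1, ∞) the function g₂(a) = 3(2a−1)(1+a)²/(√3a³+2√3a²+√3a−3) satisfies g₂'(a) ≤ 5√3/8 wherever the denominator is positive, while g₁(a) = (1+a²−a)^{3/2} satisfies g₁'(a) > 3/2. -/
/-!
Writing `s = √3`, the denominator of `g₂` is `s a (a + 1)² - 3`, and the quotient rule numerator
collapses to `3 s (a + 1)⁴ - 54 a (a + 1)`. Clearing the denominator and using `s² = 3`, the bound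
on `g₂'` becomes `18 a (a + 1) (5 a - 19) ≤ s ((15 a² - 24) (a + 1)⁴ + 45)`, which is affine in `s`
and holds for `s = 1` and `s = 2` when `a ≥ 1`, hence for `s = √3 ∈ [1, 2]`.
For `g₁`, `g₁'(a) = (3/2) (2a - 1) √(1 + a² - a)` and both `2a - 1` and the square root exceed `1`.
-/

open Real

lemma cubic_le_mul_sextic_of_one_le (a c : ℝ) (ha : 1 ≤ a) (hc₁ : 1 ≤ c) (hc₂ : c ≤ 2) :
    18 * a * (a + 1) * (5 * a - 19) ≤ c * ((15 * a ^ 2 - 24) * (a + 1) ^ 4 + 45) := by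
  obtain ⟨t, ht, rfl⟩ : ∃ t, 0 ≤ t ∧ a = 1 + t := ⟨a - 1, by linarith, by ring⟩
  have at_one : 18 * (1 + t) * (1 + t + 1) * (5 * (1 + t) - 19)
      ≤ (15 * (1 + t) ^ 2 - 24) * (1 + t + 1) ^ 4 + 45 := by
    nlinarith [pow_nonneg ht 2, pow_nonneg ht 3, pow_nonneg ht 4, pow_nonneg ht 5, pow_nonneg ht 6]
  have at_two : 18 * (1 + t) * (1 + t + 1) * (5 * (1 + t) - 19)
      ≤ 2 * ((15 * (1 + t) ^ 2 - 24) * (1 + t + 1) ^ 4 + 45) := by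
    nlinarith [pow_nonneg ht 2, pow_nonneg ht 3, pow_nonneg ht 4, pow_nonneg ht 5, pow_nonneg ht 6]
  nlinarith [mul_le_mul_of_nonneg_left at_one (sub_nonneg.2 hc₂),
    mul_le_mul_of_nonneg_left at_two (sub_nonneg.2 hc₁)]

lemma hasDerivAt_cubic_quotient (s a : ℝ) (hD : s * a ^ 3 + 2 * s * a ^ 2 + s * a - 3 ≠ 0) :
    HasDerivAt (fun x => 3 * (2 * x - 1) * (1 + x) ^ 2 / (s * x ^ 3 + 2 * s * x ^ 2 + s * x - 3))
      ((3 * s * (a + 1) ^ 4 - 54 * a * (a + 1)) /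
        (s * a ^ 3 + 2 * s * a ^ 2 + s * a - 3) ^ 2) a := by
  have hN : HasDerivAt (fun x => 3 * (2 * x - 1) * (1 + x) ^ 2) (18 * a * (1 + a)) a :=
    ((((hasDerivAt_id a).const_mul 2).sub_const 1).const_mul 3
      |>.mul (((hasDerivAt_id a).const_add 1).pow 2)).congr_deriv (by simp; ring)
  have hD' : HasDerivAt (fun x => s * x ^ 3 + 2 * s * x ^ 2 + s * x - 3)
      (s * (3 * a + 1) * (a + 1)) a :=
    (((((hasDerivAt_pow 3 a).const_mul s).add ((hasDerivAt_pow 2 a).const_mul (2 * s))).add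
      ((hasDerivAt_id a).const_mul s)).sub_const 3).congr_deriv (by simp; ring)
  refine (hN.div hD' hD).congr_deriv ?_
  congr 1
  ring

lemma hasDerivAt_quadratic_rpow_three_halves (a : ℝ) :
    HasDerivAt (fun x => (1 + x ^ 2 - x) ^ ((3 : ℝ) / 2))
      (3 / 2 * (2 * a - 1) * √(1 + a ^ 2 - a)) a := by
  have hpos : 0 < 1 + a ^ 2 - a := by nlinarith [sq_nonneg (a - 1 / 2)]
  have hu : HasDerivAt (fun x => 1 + x ^ 2 - x) (2 * a - 1) a :=
    (((hasDerivAt_pow 2 a).const_add 1).sub (hasDerivAt_id a)).congr_deriv (by simp)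
  refine (hu.rpow_const (p := 3 / 2) (Or.inl hpos.ne')).congr_deriv ?_
  rw [sqrt_eq_rpow, show (3 : ℝ) / 2 - 1 = 1 / 2 by norm_num]
  ring

theorem stmt_18 (a : ℝ) (ha : 1 < a) :
    (let g₁ : ℝ → ℝ := fun x => (1 + x^2 - x) ^ ((3:ℝ)/2)
     let g₂ : ℝ → ℝ := fun x =>
        3 * (2*x - 1) * (1 + x)^2 /
          (Real.sqrt 3 * x^3 + 2 * Real.sqrt 3 * x^2 + Real.sqrt 3 * x - 3)
     (0 < Real.sqrt 3 * a^3 + 2 * Real.sqrt 3 * a^2 + Real.sqrt 3 * a - 3 →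
        deriv g₂ a ≤ 5 * Real.sqrt 3 / 8) ∧
     3/2 < deriv g₁ a) := by
  intro g₁ g₂
  refine ⟨fun hD => ?_, ?_⟩
  · have hs : √3 ^ 2 = 3 := sq_sqrt (by norm_num)
    have hP := cubic_le_mul_sextic_of_one_le a √3 ha.le
      (by nlinarith [sqrt_nonneg 3]) (by nlinarith [sqrt_nonneg 3])
    rw [(hasDerivAt_cubic_quotient √3 a hD.ne').deriv, div_le_iff₀ (by positivity)]
    linear_combination hP / 8 + (15 / 4 * a * (a + 1) ^ 2 - 5 / 8 * √3 * a ^ 2 * (a + 1) ^ 4) * hs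
  · have hsqrt : 1 < √(1 + a ^ 2 - a) := (lt_sqrt zero_le_one).2 (by nlinarith)
    rw [(hasDerivAt_quadratic_rpow_three_halves a).deriv]
    nlinarith
end
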